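/- Let x : [0,∞) → D be continuous and suppose there are constants c₁, c₂, ℓ > 0 with c₁ e^{−ℓτ} ≤ 1 − p(x(τ))^{2c} ≤ c₂ e^{−ℓτ} for all τ ≥ 0. Set y(τ) = T⁻¹(x(τ)), t(τ) = ∫₀^τ κ(y(σ))^{−k} dσ, and t_max = ∫₀^∞ κ(y(σ))^{−k} dσ (which is finite). Then the blow-up rate is p(y(t)) ∼ (t_max − t)^{−1/k}: there exist constants C₁, C₂ > 0 and τ₀ ≥ 0 such that for all τ ≥ τ₀, C₁ (t_max − t(τ))^{−1/k} ≤ p(y(τ)) ≤ C₂ (t_max − t(τ))^{−1/k}. -/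

import Mathlib

/-!
Write `s = p(x)^{2c}`. Since `T y = x`, every term of `p(x)^{2c}` is the corresponding term of
`p(y)^{2c}` divided by `κ(y)^{2αᵢβᵢ} = κ(y)^{2c} = 1 + p(y)^{2c}`; hence `p(y)^{2c} = s / (1 - s)`
and `κ(y)^{-k} = (1 - s)^{k/(2c)}`. As `1 - s ≍ e^{-ℓτ}`, the integrand is `≍ e^{-ℓkτ/(2c)}`, so
`t_max` is finite and `t_max - t(τ) = ∫_τ^∞ κ(y)^{-k} ≍ e^{-ℓkτ/(2c)}`, while
`p(y(τ)) ≍ (1 - s)^{-1/(2c)} ≍ e^{ℓτ/(2c)}` as soon as `s ≥ 1/2`.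
Comparing the two exponentials gives the rate `(t_max - t)^{-1/k}`.
-/

open Finset

/-- The quasi-Poincaré functional `p(y) = (∑_{i∈I} aᵢ yᵢ^{2βᵢ})^{1/(2c)}`,
where `I = {i : 0 < αᵢ}`. -/
noncomputable def pF {n : ℕ} (α β : Fin n → ℕ) (a : Fin n → ℝ) (c : ℕ)
    (y : Fin n → ℝ) : ℝ :=
  (∑ i ∈ univ.filter (fun i => 0 < α i), a i * y i ^ (2 * β i)) ^ ((1 : ℝ) / (2 * (c : ℝ)))

/-- The quasi-Poincaré functional `κ(y) = (1 + p(y)^{2c})^{1/(2c)}`. -/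
noncomputable def kF {n : ℕ} (α β : Fin n → ℕ) (a : Fin n → ℝ) (c : ℕ)
    (y : Fin n → ℝ) : ℝ :=
  (1 + pF α β a c y ^ (2 * c)) ^ ((1 : ℝ) / (2 * (c : ℝ)))

/-- The quasi-Poincaré compactification `T(y)ᵢ = yᵢ / κ(y)^{αᵢ}`. -/
noncomputable def TqP {n : ℕ} (α β : Fin n → ℕ) (a : Fin n → ℝ) (c : ℕ)
    (y : Fin n → ℝ) : Fin n → ℝ :=
  fun i => y i / (kF α β a c y) ^ (α i)

lemma rpow_one_div_two_mul_pow {c : ℕ} (hc : c ≠ 0) {s : ℝ} (hs : 0 ≤ s) :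
    (s ^ ((1 : ℝ) / (2 * c))) ^ (2 * c) = s := by
  have h : (1 : ℝ) / (2 * c) = ((2 * c : ℕ) : ℝ)⁻¹ := by push_cast; rw [one_div]
  rw [h, Real.rpow_inv_natCast_pow hs (mul_ne_zero two_ne_zero hc)]

/-- `p(y)^{2c}`. -/
def pSum {n : ℕ} (α β : Fin n → ℕ) (a : Fin n → ℝ) (y : Fin n → ℝ) : ℝ :=
  ∑ i ∈ univ.filter (fun i => 0 < α i), a i * y i ^ (2 * β i)

lemma pSum_nonneg {n : ℕ} (α β : Fin n → ℕ) {a : Fin n → ℝ} (ha : ∀ i, 0 ≤ a i)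
    (y : Fin n → ℝ) : 0 ≤ pSum α β a y :=
  Finset.sum_nonneg fun i _ => mul_nonneg (ha i) ((even_two_mul (β i)).pow_nonneg _)

lemma continuous_pSum {n : ℕ} (α β : Fin n → ℕ) (a : Fin n → ℝ) : Continuous (pSum α β a) := by
  unfold pSum
  fun_prop

section Compactification

variable {n : ℕ} {α β : Fin n → ℕ} {a : Fin n → ℝ} {c : ℕ}

lemma pF_eq_rpow (y : Fin n → ℝ) :
    pF α β a c y = pSum α β a y ^ ((1 : ℝ) / (2 * c)) := rfl

lemma pF_pow_two_mul (hc : c ≠ 0) (ha : ∀ i, 0 ≤ a i) (y : Fin n → ℝ) :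
    pF α β a c y ^ (2 * c) = pSum α β a y :=
  rpow_one_div_two_mul_pow hc (pSum_nonneg α β ha y)

lemma kF_eq_rpow (hc : c ≠ 0) (ha : ∀ i, 0 ≤ a i) (y : Fin n → ℝ) :
    kF α β a c y = (1 + pSum α β a y) ^ ((1 : ℝ) / (2 * c)) := by
  rw [kF, pF_pow_two_mul hc ha]

lemma kF_pow_two_mul (hc : c ≠ 0) (ha : ∀ i, 0 ≤ a i) (y : Fin n → ℝ) :
    kF α β a c y ^ (2 * c) = 1 + pSum α β a y := by
  rw [kF_eq_rpow hc ha]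
  exact rpow_one_div_two_mul_pow hc (by linarith [pSum_nonneg α β ha y])

lemma pSum_TqP_mul_one_add (hc : c ≠ 0) (ha : ∀ i, 0 ≤ a i)
    (hαβ : ∀ i, 0 < α i → α i * β i = c) (y : Fin n → ℝ) :
    pSum α β a (TqP α β a c y) * (1 + pSum α β a y) = pSum α β a y := by
  have hκ := kF_pow_two_mul (α := α) (β := β) hc ha y
  have hpos : 0 < 1 + pSum α β a y := by linarith [pSum_nonneg α β ha y]
  calc pSum α β a (TqP α β a c y) * (1 + pSum α β a y)
      = ∑ i ∈ univ.filter (fun i => 0 < α i),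
          a i * TqP α β a c y i ^ (2 * β i) * (1 + pSum α β a y) := Finset.sum_mul _ _ _
    _ = pSum α β a y := Finset.sum_congr rfl fun i hi => by
        have hαi : 0 < α i := (Finset.mem_filter.mp hi).2
        have hκi : (kF α β a c y ^ α i) ^ (2 * β i) = 1 + pSum α β a y := by
          rw [← pow_mul, ← hκ, ← hαβ i hαi]; ring_nf
        rw [TqP, div_pow, hκi]
        field_simp [hpos.ne']

variable (hc : c ≠ 0) (ha : ∀ i, 0 ≤ a i) (hαβ : ∀ i, 0 < α i → α i * β i = c)
include hc ha hαβ

lemma pSum_eq_div {x y : Fin n → ℝ} (hxy : TqP α β a c y = x) (hx : pSum α β a x < 1) :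
    pSum α β a y = pSum α β a x / (1 - pSum α β a x) := by
  have := pSum_TqP_mul_one_add hc ha hαβ y
  rw [hxy] at this
  rw [eq_div_iff (sub_pos.mpr hx).ne']
  linarith

lemma kF_zpow_neg (k : ℕ) {x y : Fin n → ℝ} (hxy : TqP α β a c y = x) (hx : pSum α β a x < 1) :
    kF α β a c y ^ (-(k : ℤ)) = (1 - pSum α β a x) ^ ((k : ℝ) / (2 * c)) := by
  have hs : 0 < 1 - pSum α β a x := sub_pos.mpr hx
  have h1 : 1 + pSum α β a y = (1 - pSum α β a x)⁻¹ := by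
    rw [pSum_eq_div hc ha hαβ hxy hx]
    field_simp
    ring
  rw [kF_eq_rpow hc ha, h1, Real.inv_rpow hs.le, ← Real.rpow_neg hs.le, ← Real.rpow_intCast,
    ← Real.rpow_mul hs.le]
  congr 1
  push_cast
  ring

lemma kF_zpow_neg_mem_Icc (k : ℕ) {x y : Fin n → ℝ} (hxy : TqP α β a c y = x) {D₁ D₂ : ℝ}
    (hD₁ : 0 < D₁) (hx : D₁ ≤ 1 - pSum α β a x ∧ 1 - pSum α β a x ≤ D₂) :
    kF α β a c y ^ (-(k : ℤ)) ∈ Set.Icc (D₁ ^ ((k : ℝ) / (2 * c))) (D₂ ^ ((k : ℝ) / (2 * c))) := by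
  rw [kF_zpow_neg hc ha hαβ k hxy (by linarith)]
  exact ⟨Real.rpow_le_rpow hD₁.le hx.1 (by positivity),
    Real.rpow_le_rpow (by linarith) hx.2 (by positivity)⟩

lemma continuousOn_kF_zpow_neg (k : ℕ) {x y : ℝ → Fin n → ℝ} {s : Set ℝ}
    (hxc : ContinuousOn x s) (hxy : ∀ τ ∈ s, TqP α β a c (y τ) = x τ)
    (hx : ∀ τ ∈ s, pSum α β a (x τ) < 1) :
    ContinuousOn (fun τ => kF α β a c (y τ) ^ (-(k : ℤ))) s :=
  ((continuousOn_const.sub ((continuous_pSum α β a).comp_continuousOn hxc)).rpow_const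
    fun _ _ => Or.inr (by positivity)).congr
    fun τ hτ => kF_zpow_neg hc ha hαβ k (hxy τ hτ) (hx τ hτ)

lemma pF_le_rpow_neg {x y : Fin n → ℝ} (hxy : TqP α β a c y = x) {D : ℝ} (hD : 0 < D)
    (hx : D ≤ 1 - pSum α β a x) :
    pF α β a c y ≤ D ^ (-((1 : ℝ) / (2 * c))) := by
  have hs : 0 < 1 - pSum α β a x := hD.trans_le hx
  have hpSum : pSum α β a y ≤ D⁻¹ := by
    rw [pSum_eq_div hc ha hαβ hxy (sub_pos.mp hs), div_le_iff₀ hs, ← div_eq_inv_mul,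
      le_div_iff₀ hD]
    nlinarith
  rw [pF_eq_rpow, Real.rpow_neg hD.le, ← Real.inv_rpow hD.le]
  exact Real.rpow_le_rpow (pSum_nonneg α β ha y) hpSum (by positivity)

lemma rpow_neg_le_pF {x y : Fin n → ℝ} (hxy : TqP α β a c y = x) {D : ℝ}
    (hhalf : 1 / 2 ≤ pSum α β a x) (hx : pSum α β a x < 1) (hD : 1 - pSum α β a x ≤ D) :
    (2 * D) ^ (-((1 : ℝ) / (2 * c))) ≤ pF α β a c y := by
  have hs : 0 < 1 - pSum α β a x := sub_pos.mpr hx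
  have h2D : 0 < 2 * D := by linarith
  have hpSum : (2 * D)⁻¹ ≤ pSum α β a y := by
    rw [pSum_eq_div hc ha hαβ hxy hx, le_div_iff₀ hs, ← div_eq_inv_mul, div_le_iff₀ h2D]
    nlinarith
  rw [pF_eq_rpow, Real.rpow_neg h2D.le, ← Real.inv_rpow h2D.le]
  exact Real.rpow_le_rpow (by positivity) hpSum (by positivity)

end Compactification

section ExponentialTail

open MeasureTheory Set

variable {f : ℝ → ℝ} {m A B t : ℝ}

lemma exists_forall_ge_mul_exp_neg_mul_le (hm : 0 < m) (B : ℝ) {ε : ℝ} (hε : 0 < ε) :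
    ∃ τ₀, 0 ≤ τ₀ ∧ ∀ τ, τ₀ ≤ τ → B * Real.exp (-m * τ) ≤ ε := by
  have hlim : Filter.Tendsto (fun τ => B * Real.exp (-m * τ)) Filter.atTop (nhds (B * 0)) :=
    ((Real.tendsto_exp_neg_atTop_nhds_zero.comp
      (Filter.tendsto_id.const_mul_atTop hm)).congr fun τ => by simp [neg_mul]).const_mul B
  obtain ⟨τ₁, hτ₁⟩ := Filter.eventually_atTop.1 (hlim.eventually (ge_mem_nhds (by simpa using hε)))
  exact ⟨max 0 τ₁, le_max_left _ _, fun τ hτ => hτ₁ τ ((le_max_right _ _).trans hτ)⟩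

lemma integral_Ioi_const_mul_exp_neg_mul (hm : 0 < m) (A t : ℝ) :
    ∫ σ in Ioi t, A * Real.exp (-m * σ) = A * Real.exp (-m * t) / m := by
  rw [integral_const_mul, integral_exp_mul_Ioi (neg_neg_of_pos hm), neg_div_neg_eq, mul_div_assoc]

lemma integrableOn_Ici_of_le_exp (hm : 0 < m) (hf : ContinuousOn f (Ici t))
    (hf0 : ∀ σ ∈ Ici t, 0 ≤ f σ) (hfB : ∀ σ ∈ Ici t, f σ ≤ B * Real.exp (-m * σ)) :
    IntegrableOn f (Ici t) := by
  refine Integrable.mono' (g := fun σ => B * Real.exp (-m * σ)) ?_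
    (hf.aestronglyMeasurable measurableSet_Ici)
    (ae_restrict_of_forall_mem measurableSet_Ici fun σ hσ => ?_)
  · exact (integrableOn_Ici_iff_integrableOn_Ioi (f := fun σ => B * Real.exp (-m * σ))).2
      ((integrableOn_exp_mul_Ioi (neg_neg_of_pos hm) t).const_mul B)
  · rw [Real.norm_eq_abs, abs_of_nonneg (hf0 σ hσ)]
    exact hfB σ hσ

lemma integral_Ioi_mem_Icc_of_exp_bounds (hm : 0 < m) (hf : IntegrableOn f (Ioi t))
    (hAf : ∀ σ ∈ Ioi t, A * Real.exp (-m * σ) ≤ f σ)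
    (hfB : ∀ σ ∈ Ioi t, f σ ≤ B * Real.exp (-m * σ)) :
    ∫ σ in Ioi t, f σ ∈ Icc (A * Real.exp (-m * t) / m) (B * Real.exp (-m * t) / m) := by
  rw [← integral_Ioi_const_mul_exp_neg_mul hm, ← integral_Ioi_const_mul_exp_neg_mul hm]
  have hexp (C : ℝ) : IntegrableOn (fun σ => C * Real.exp (-m * σ)) (Ioi t) :=
    (integrableOn_exp_mul_Ioi (neg_neg_of_pos hm) t).const_mul C
  exact ⟨setIntegral_mono_on (hexp A) hf measurableSet_Ioi hAf,
    setIntegral_mono_on hf (hexp B) measurableSet_Ioi hfB⟩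

lemma integral_Ioi_sub_intervalIntegral {a b : ℝ} (hf : IntegrableOn f (Ioi a)) (hab : a ≤ b) :
    (∫ σ in Ioi a, f σ) - ∫ σ in a..b, f σ = ∫ σ in Ioi b, f σ := by
  rw [← intervalIntegral.integral_Ioi_sub_Ioi hf hab, sub_sub_cancel]

lemma integrableOn_Ici_and_tail_mem_Icc (hm : 0 < m) (hA : 0 ≤ A) (hf : ContinuousOn f (Ici t))
    (hfAB : ∀ σ ∈ Ici t, A * Real.exp (-m * σ) ≤ f σ ∧ f σ ≤ B * Real.exp (-m * σ)) :
    IntegrableOn f (Ici t) ∧ ∀ τ ∈ Ici t, (∫ σ in Ioi t, f σ) - ∫ σ in t..τ, f σ ∈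
      Icc (A / m * Real.exp (-m * τ)) (B / m * Real.exp (-m * τ)) := by
  have hint : IntegrableOn f (Ici t) := integrableOn_Ici_of_le_exp hm hf
    (fun σ hσ => (by positivity : 0 ≤ A * Real.exp (-m * σ)).trans (hfAB σ hσ).1)
    fun σ hσ => (hfAB σ hσ).2
  refine ⟨hint, fun τ hτ => ?_⟩
  rw [integral_Ioi_sub_intervalIntegral (hint.mono_set Ioi_subset_Ici_self) hτ,
    div_mul_eq_mul_div, div_mul_eq_mul_div]
  exact integral_Ioi_mem_Icc_of_exp_bounds hm (hint.mono_set (Ioi_subset_Ici hτ))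
    (fun σ hσ => (hfAB σ (mem_Ici.2 (hτ.trans (le_of_lt hσ)))).1)
    fun σ hσ => (hfAB σ (mem_Ici.2 (hτ.trans (le_of_lt hσ)))).2

end ExponentialTail

section Comparison

variable {k ρ A E R P : ℝ}

lemma neg_one_div_nonpos (hk : 0 < k) : -1 / k ≤ 0 :=
  div_nonpos_of_nonpos_of_nonneg (by norm_num) hk.le

lemma rpow_one_div_mul_mul_rpow_neg_one_div (hk : k ≠ 0) (hA : 0 < A) (hE : 0 < E) :
    A ^ (1 / k) * (A * E ^ (k * ρ)) ^ (-1 / k) = E ^ (-ρ) := by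
  rw [Real.mul_rpow hA.le (by positivity), ← mul_assoc, ← Real.rpow_add hA,
    ← Real.rpow_mul hE.le]
  field_simp
  simp

lemma mul_rpow_neg_one_div_le_of_le (hk : 0 < k) (hA : 0 < A) (hE : 0 < E) {A' : ℝ}
    (hA' : 0 < A') (hR : A * E ^ (k * ρ) ≤ R) (hP : (A' * E) ^ (-ρ) ≤ P) :
    A' ^ (-ρ) * A ^ (1 / k) * R ^ (-1 / k) ≤ P :=
  calc A' ^ (-ρ) * A ^ (1 / k) * R ^ (-1 / k)
      ≤ A' ^ (-ρ) * (A ^ (1 / k) * (A * E ^ (k * ρ)) ^ (-1 / k)) := by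
        rw [mul_assoc]
        exact mul_le_mul_of_nonneg_left (mul_le_mul_of_nonneg_left
          (Real.rpow_le_rpow_of_nonpos (by positivity) hR (neg_one_div_nonpos hk)) (by positivity))
          (by positivity)
    _ = (A' * E) ^ (-ρ) := by
        rw [rpow_one_div_mul_mul_rpow_neg_one_div hk.ne' hA hE, Real.mul_rpow hA'.le hE.le]
    _ ≤ P := hP

lemma le_mul_rpow_neg_one_div_of_le (hk : 0 < k) (hB : 0 < B) (hE : 0 < E) {B' : ℝ}
    (hB' : 0 < B') (hR0 : 0 < R) (hR : R ≤ B * E ^ (k * ρ)) (hP : P ≤ (B' * E) ^ (-ρ)) :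
    P ≤ B' ^ (-ρ) * B ^ (1 / k) * R ^ (-1 / k) :=
  calc P ≤ (B' * E) ^ (-ρ) := hP
    _ = B' ^ (-ρ) * (B ^ (1 / k) * (B * E ^ (k * ρ)) ^ (-1 / k)) := by
        rw [rpow_one_div_mul_mul_rpow_neg_one_div hk.ne' hB hE, Real.mul_rpow hB'.le hE.le]
    _ ≤ B' ^ (-ρ) * B ^ (1 / k) * R ^ (-1 / k) := by
        rw [mul_assoc]
        exact mul_le_mul_of_nonneg_left (mul_le_mul_of_nonneg_left
          (Real.rpow_le_rpow_of_nonpos hR0 hR (neg_one_div_nonpos hk)) (by positivity))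
          (by positivity)

end Comparison

theorem blowup_rate_general
    {n : ℕ} (α β : Fin n → ℕ) (a : Fin n → ℝ) (c : ℕ)
    (hc : 0 < c)
    (hαβ : ∀ i, 0 < α i → α i * β i = c)
    (ha : ∀ i, 1 ≤ a i)
    (k : ℕ) (hk : 1 ≤ k)
    (x : ℝ → Fin n → ℝ) (hxc : ContinuousOn x (Set.Ici 0))
    (c₁ c₂ ℓ : ℝ) (hc₁ : 0 < c₁) (hc₂ : 0 < c₂) (hℓ : 0 < ℓ)
    (hlow : ∀ τ : ℝ, 0 ≤ τ →
      c₁ * Real.exp (-ℓ * τ) ≤ 1 - pF α β a c (x τ) ^ (2 * c))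
    (hupp : ∀ τ : ℝ, 0 ≤ τ →
      1 - pF α β a c (x τ) ^ (2 * c) ≤ c₂ * Real.exp (-ℓ * τ))
    (y : ℝ → Fin n → ℝ)
    (hy : ∀ τ : ℝ, 0 ≤ τ → TqP α β a c (y τ) = x τ) :
    MeasureTheory.IntegrableOn
      (fun σ : ℝ => (kF α β a c (y σ)) ^ (-(k : ℤ))) (Set.Ici 0) ∧
    ∃ C₁ C₂ τ₀ : ℝ, 0 < C₁ ∧ 0 < C₂ ∧ 0 ≤ τ₀ ∧
      ∀ τ : ℝ, τ₀ ≤ τ →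
        C₁ * ((∫ σ in Set.Ioi (0 : ℝ), (kF α β a c (y σ)) ^ (-(k : ℤ))) -
              ∫ σ in (0 : ℝ)..τ, (kF α β a c (y σ)) ^ (-(k : ℤ)))
            ^ (-(1 : ℝ) / (k : ℝ)) ≤ pF α β a c (y τ) ∧
        pF α β a c (y τ) ≤
          C₂ * ((∫ σ in Set.Ioi (0 : ℝ), (kF α β a c (y σ)) ^ (-(k : ℤ))) -
                ∫ σ in (0 : ℝ)..τ, (kF α β a c (y σ)) ^ (-(k : ℤ)))
              ^ (-(1 : ℝ) / (k : ℝ)) := by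
  have ha0 : ∀ i, 0 ≤ a i := fun i => zero_le_one.trans (ha i)
  have hk0 : (0 : ℝ) < k := by exact_mod_cast hk
  set ρ : ℝ := 1 / (2 * c)
  set m : ℝ := ℓ * (k * ρ) with hm_def
  set E : ℝ → ℝ := fun τ => Real.exp (-ℓ * τ)
  have hEm (τ : ℝ) : E τ ^ (k * ρ) = Real.exp (-m * τ) := by
    rw [← Real.exp_mul, hm_def]; ring_nf
  have hx (τ : ℝ) (hτ : 0 ≤ τ) :
      c₁ * E τ ≤ 1 - pSum α β a (x τ) ∧ 1 - pSum α β a (x τ) ≤ c₂ * E τ := by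
    simpa only [pF_pow_two_mul hc.ne' ha0] using And.intro (hlow τ hτ) (hupp τ hτ)
  have hx1 (τ : ℝ) (hτ : 0 ≤ τ) : pSum α β a (x τ) < 1 := by
    linarith [(hx τ hτ).1, mul_pos hc₁ (Real.exp_pos (-ℓ * τ))]
  have hf (σ : ℝ) (hσ : σ ∈ Set.Ici 0) :
      c₁ ^ (k * ρ) * Real.exp (-m * σ) ≤ kF α β a c (y σ) ^ (-(k : ℤ)) ∧
        kF α β a c (y σ) ^ (-(k : ℤ)) ≤ c₂ ^ (k * ρ) * Real.exp (-m * σ) := by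
    rw [← hEm, ← Real.mul_rpow hc₁.le (Real.exp_pos _).le,
      ← Real.mul_rpow hc₂.le (Real.exp_pos _).le,
      show (k : ℝ) * ρ = k / (2 * c) from mul_one_div _ _]
    exact kF_zpow_neg_mem_Icc hc.ne' ha0 hαβ k (hy σ hσ) (by positivity) (hx σ hσ)
  obtain ⟨hint, htail⟩ := integrableOn_Ici_and_tail_mem_Icc (by positivity) (by positivity)
    (continuousOn_kF_zpow_neg hc.ne' ha0 hαβ k hxc hy hx1) hf
  obtain ⟨τ₀, hτ₀, hτ₀half⟩ := exists_forall_ge_mul_exp_neg_mul_le hℓ c₂ one_half_pos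
  refine ⟨hint, (2 * c₂) ^ (-ρ) * (c₁ ^ (k * ρ) / m) ^ (1 / (k : ℝ)),
    c₁ ^ (-ρ) * (c₂ ^ (k * ρ) / m) ^ (1 / (k : ℝ)), τ₀, by positivity, by positivity, hτ₀,
    fun τ hτ => ?_⟩
  have hτ0 : 0 ≤ τ := hτ₀.trans hτ
  have hhalf : 1 / 2 ≤ pSum α β a (x τ) := by linarith [(hx τ hτ0).2, hτ₀half τ hτ]
  obtain ⟨hRlow, hRupp⟩ := htail τ hτ0
  rw [← hEm] at hRlow hRupp
  constructor
  · refine mul_rpow_neg_one_div_le_of_le hk0 (by positivity) (Real.exp_pos _) (by positivity)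
      hRlow ?_
    rw [mul_assoc]
    exact rpow_neg_le_pF hc.ne' ha0 hαβ (hy τ hτ0) hhalf (hx1 τ hτ0) (hx τ hτ0).2
  · exact le_mul_rpow_neg_one_div_of_le hk0 (by positivity) (Real.exp_pos _) hc₁
      ((by positivity : (0 : ℝ) < _).trans_le hRlow) hRupp
      (pF_le_rpow_neg hc.ne' ha0 hαβ (hy τ hτ0) (by positivity) (hx τ hτ0).1)

/-- If `c₁ e^{−ℓτ} ≤ 1 − p(x(τ))^{2c} ≤ c₂ e^{−ℓτ}` along a trajectory
`x : [0,∞) → D`, then with `y = T⁻¹ ∘ x`, `t(τ) = ∫₀^τ κ(y)^{−k}` and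
`t_max = ∫₀^∞ κ(y)^{−k}` (finite), we have the blow-up rate
`p(y(t)) ∼ (t_max − t)^{−1/k}`: there are `C₁, C₂ > 0` and `τ₀ ≥ 0` with
`C₁ (t_max − t(τ))^{−1/k} ≤ p(y(τ)) ≤ C₂ (t_max − t(τ))^{−1/k}` for `τ ≥ τ₀`. -/
theorem blowup_rate
    {n : ℕ} (hn : 1 ≤ n) (α β : Fin n → ℕ) (a : Fin n → ℝ) (c : ℕ)
    (hα : ∃ i, 0 < α i) (hc : 0 < c)
    (hαβ : ∀ i, 0 < α i → α i * β i = c)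
    (hβ0 : ∀ i, α i = 0 → β i = 0)
    (ha : ∀ i, 1 ≤ a i)
    (k : ℕ) (hk : 1 ≤ k)
    (x : ℝ → Fin n → ℝ) (hxc : ContinuousOn x (Set.Ici 0))
    (hxD : ∀ τ : ℝ, 0 ≤ τ → pF α β a c (x τ) < 1)
    (c₁ c₂ ℓ : ℝ) (hc₁ : 0 < c₁) (hc₂ : 0 < c₂) (hℓ : 0 < ℓ)
    (hlow : ∀ τ : ℝ, 0 ≤ τ →
      c₁ * Real.exp (-ℓ * τ) ≤ 1 - pF α β a c (x τ) ^ (2 * c))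
    (hupp : ∀ τ : ℝ, 0 ≤ τ →
      1 - pF α β a c (x τ) ^ (2 * c) ≤ c₂ * Real.exp (-ℓ * τ))
    (y : ℝ → Fin n → ℝ)
    (hy : ∀ τ : ℝ, 0 ≤ τ → TqP α β a c (y τ) = x τ) :
    MeasureTheory.IntegrableOn
      (fun σ : ℝ => (kF α β a c (y σ)) ^ (-(k : ℤ))) (Set.Ici 0) ∧
    ∃ C₁ C₂ τ₀ : ℝ, 0 < C₁ ∧ 0 < C₂ ∧ 0 ≤ τ₀ ∧
      ∀ τ : ℝ, τ₀ ≤ τ →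
        C₁ * ((∫ σ in Set.Ioi (0 : ℝ), (kF α β a c (y σ)) ^ (-(k : ℤ))) -
              ∫ σ in (0 : ℝ)..τ, (kF α β a c (y σ)) ^ (-(k : ℤ)))
            ^ (-(1 : ℝ) / (k : ℝ)) ≤ pF α β a c (y τ) ∧
        pF α β a c (y τ) ≤
          C₂ * ((∫ σ in Set.Ioi (0 : ℝ), (kF α β a c (y σ)) ^ (-(k : ℤ))) -
                ∫ σ in (0 : ℝ)..τ, (kF α β a c (y σ)) ^ (-(k : ℤ)))
              ^ (-(1 : ℝ) / (k : ℝ)) :=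
  blowup_rate_general α β a c hc hαβ ha k hk x hxc c₁ c₂ ℓ hc₁ hc₂ hℓ hlow hupp y hy
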